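/- arXiv:2101.03058 — 2 statements merged into one kernel-verified Lean document; each statement's English description precedes it below -/
import Mathlib

section
/- Let Σ be a schema and S a finite set of TGDs over Σ that are both guarded and full. Then for every finite Σ-instance D and every conjunctive query q(x̄) over Σ: q(ch_S(D)) = ch_S(q)(ch_S(D)), where ch_S(D) is the least superset of D satisfying every TGD in S, and ch_S(q) is the CQ with answer variables x̄ obtained by chasing the canonical database D_q of q with S and re-adding the equality atoms of q. -/
namespace DB

/-- A relational schema: a finite set of relation symbols with arities. -/
structure Schema where
  Rel : Type
  ar : Rel → ℕ
  relFinite : Finite Rel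

/-- A fact over a schema `S` with constants from `C`. -/
abbrev Fact (S : Schema) (C : Type) : Type := (R : S.Rel) × (Fin (S.ar R) → C)

/-- An instance over schema `S` with constants from `C`: a set of facts. -/
abbrev Inst (S : Schema) (C : Type) : Type := Set (Fact S C)

/-- The active domain of an instance: the constants occurring in its facts. -/
def adom {S : Schema} {C : Type} (I : Inst S C) : Set C :=
  {c | ∃ f ∈ I, ∃ i, f.2 i = c}

/-- A tuple-generating dependency `∀x̄∀ȳ (φ(x̄,ȳ) → ∃z̄ ψ(x̄,z̄))`:
`X` are the frontier variables, `Y` the body-only variables, `Z` the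
existential head variables; body and head are conjunctions (sets) of atoms. -/
structure TGD (S : Schema) where
  X : Type
  Y : Type
  Z : Type
  finX : Finite X
  finY : Finite Y
  finZ : Finite Z
  body : Set (Fact S (X ⊕ Y))
  head : Set (Fact S (X ⊕ Z))

/-- Satisfaction of a TGD by an instance: every assignment making all body
atoms facts of the instance extends to one making all head atoms facts. -/
def tgdSat {S : Schema} {C : Type} (I : Inst S C) (T : TGD S) : Prop :=
  ∀ (a : T.X → C) (b : T.Y → C),
    (∀ A ∈ T.body, (⟨A.1, Sum.elim a b ∘ A.2⟩ : Fact S C) ∈ I) →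
    ∃ c : T.Z → C, ∀ A ∈ T.head, (⟨A.1, Sum.elim a c ∘ A.2⟩ : Fact S C) ∈ I

/-- A TGD is full if it has no existential head variables. -/
def TGD.IsFull {S : Schema} (T : TGD S) : Prop := IsEmpty T.Z

/-- A TGD is guarded if its body is `true` (empty) or contains an atom
mentioning all variables occurring in the body. -/
def TGD.IsGuarded {S : Schema} (T : TGD S) : Prop :=
  T.body = ∅ ∨ ∃ G ∈ T.body, ∀ v : T.X ⊕ T.Y,
    (∃ A ∈ T.body, ∃ i, A.2 i = v) → ∃ i, G.2 i = v

/-- An instance satisfies every TGD of a set. -/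
def satAll {S : Schema} {C : Type} (I : Inst S C) (Ω : Set (TGD S)) : Prop :=
  ∀ T ∈ Ω, tgdSat I T

/-- `chD` is the result of chasing `D` with `Ω`: the least superset of `D`
satisfying every TGD in `Ω`. -/
def IsChase {S : Schema} {C : Type} (Ω : Set (TGD S)) (D chD : Inst S C) : Prop :=
  D ⊆ chD ∧ satAll chD Ω ∧ ∀ J : Inst S C, D ⊆ J → satAll J Ω → chD ⊆ J

/-- The chase of `D` with `Ω`, as the intersection of all supersets of `D`
satisfying every TGD in `Ω`. -/
def chase {S : Schema} {C : Type} (Ω : Set (TGD S)) (D : Inst S C) : Inst S C :=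
  ⋂₀ {J : Inst S C | D ⊆ J ∧ satAll J Ω}

/-- A conjunctive query with `n` answer variables: quantified variables `V`,
a set of relational atoms over the variables `Fin n ⊕ V`, and equality atoms
between answer variables. -/
structure CQ (S : Schema) (n : ℕ) where
  V : Type
  finV : Finite V
  atoms : Set (Fact S (Fin n ⊕ V))
  eqs : Set (Fin n × Fin n)

/-- The canonical database of a CQ: its relational atoms, variables read as
constants. -/
def canonDB {S : Schema} {n : ℕ} (q : CQ S n) : Inst S (Fin n ⊕ q.V) := q.atoms

/-- A homomorphism from a CQ to an instance: a map from the variables into the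
active domain sending every relational atom to a fact and respecting the
equality atoms. -/
def IsHom {S : Schema} {C : Type} {n : ℕ} (q : CQ S n) (I : Inst S C)
    (h : Fin n ⊕ q.V → C) : Prop :=
  (∀ v, h v ∈ adom I) ∧
  (∀ A ∈ q.atoms, (⟨A.1, h ∘ A.2⟩ : Fact S C) ∈ I) ∧
  (∀ e ∈ q.eqs, h (Sum.inl e.1) = h (Sum.inl e.2))

/-- The answer set of a CQ on an instance. -/
def answers {S : Schema} {C : Type} {n : ℕ} (q : CQ S n) (I : Inst S C) :
    Set (Fin n → C) :=
  {t | ∃ h, IsHom q I h ∧ t = h ∘ Sum.inl}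

/-- The chase of a CQ with a set of TGDs: chase the canonical database and
read the facts back as atoms, keeping answer variables and equality atoms. -/
def chaseCQ {S : Schema} {n : ℕ} (Ω : Set (TGD S)) (q : CQ S n) : CQ S n :=
  ⟨q.V, q.finV, chase Ω (canonDB q), q.eqs⟩

/-- The direct product of two instances. -/
def prodInst {S : Schema} {C₁ C₂ : Type} (I₁ : Inst S C₁) (I₂ : Inst S C₂) :
    Inst S (C₁ × C₂) :=
  {f | (⟨f.1, fun i => (f.2 i).1⟩ : Fact S C₁) ∈ I₁ ∧
       (⟨f.1, fun i => (f.2 i).2⟩ : Fact S C₂) ∈ I₂}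

/-- `f'` is obtained from the fact `f` by replacing each occurrence of a
chosen constant `c` by a clone `κ c j` with `1 ≤ j ≤ m c` (occurrences are
replaced independently), other constants being kept. -/
def CloneFact {S : Schema} {C : Type} (chosen : Set C) (m : C → ℕ) (κ : C → ℕ → C)
    (f f' : Fact S C) : Prop :=
  ∃ t' : Fin (S.ar f.1) → C, f' = ⟨f.1, t'⟩ ∧
    ∀ i, (f.2 i ∉ chosen ∧ t' i = f.2 i) ∨
         (f.2 i ∈ chosen ∧ ∃ j, 1 ≤ j ∧ j ≤ m (f.2 i) ∧ t' i = κ (f.2 i) j)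

/-- `I'` is obtained from `I` by cloning constants: choose finitely many
constants of `adom I`, positive numbers of clones, fresh pairwise distinct
clone constants, and add all atoms obtained from atoms of `I` by replacing
each occurrence of each chosen constant by one of its clones. -/
def IsCloneOf {S : Schema} {C : Type} (I I' : Inst S C) : Prop :=
  ∃ (chosen : Set C) (m : C → ℕ) (κ : C → ℕ → C),
    chosen.Finite ∧ chosen ⊆ adom I ∧ (∀ c ∈ chosen, 1 ≤ m c) ∧
    (∀ c ∈ chosen, ∀ j, 1 ≤ j → j ≤ m c → κ c j ∉ adom I) ∧
    (∀ c ∈ chosen, ∀ c' ∈ chosen, ∀ j j', 1 ≤ j → j ≤ m c → 1 ≤ j' → j' ≤ m c' →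
      κ c j = κ c' j' → c = c' ∧ j = j') ∧
    I' = I ∪ {f' | ∃ f ∈ I, CloneFact chosen m κ f f'}

/-- The instance obtained from `D` by cloning every constant of `F` exactly
`m` times, with clone constants given by `κ`. -/
def cloneBy {S : Schema} {C : Type} (F : Set C) (m : ℕ) (κ : C → ℕ → C)
    (D : Inst S C) : Inst S C :=
  D ∪ {f' | ∃ f ∈ D, CloneFact F (fun _ => m) κ f f'}

/-- A constant is an `F`-copy if it belongs to `F` or is one of the first `m`
clones of a constant of `F`. -/
def IsFCopy {C : Type} (F : Set C) (m : ℕ) (κ : C → ℕ → C) (c : C) : Prop :=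
  c ∈ F ∨ ∃ c₀ ∈ F, ∃ j, 1 ≤ j ∧ j ≤ m ∧ c = κ c₀ j


/-!
A homomorphism `h` from `q` into `chD` pulls `chD` back to an instance over the variables of `q`
that contains the atoms of `q`. Full TGDs are preserved under such pullbacks, so by minimality the
chase of `q` lies in the pullback too, i.e. `h` is also a homomorphism from the chased query.
Conversely the chased query has more atoms, so it has fewer answers.
-/

def Fact.map {S : Schema} {C C' : Type} (h : C → C') (f : Fact S C) : Fact S C' :=
  ⟨f.1, h ∘ f.2⟩

section Pullback

variable {S : Schema} {C C' : Type}

theorem tgdSat_preimage_map {T : TGD S} (hT : T.IsFull) {I : Inst S C} (hI : tgdSat I T)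
    (h : C' → C) : tgdSat (Fact.map h ⁻¹' I) T := by
  have : IsEmpty T.Z := hT
  intro a b hbody
  obtain ⟨c, hc⟩ := hI (h ∘ a) (h ∘ b) fun A hA => by
    simpa only [Fact.map, Set.mem_preimage, ← Function.comp_assoc, Sum.comp_elim]
      using hbody A hA
  -- Without existential variables the head witness is forced, so it factors through `h`.
  have hc_eq : c = h ∘ isEmptyElim := Subsingleton.elim _ _
  refine ⟨isEmptyElim, fun A hA => ?_⟩
  simpa only [Fact.map, Set.mem_preimage, ← Function.comp_assoc, Sum.comp_elim, ← hc_eq]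
    using hc A hA

theorem satAll_preimage_map {Ω : Set (TGD S)} (hfull : ∀ T ∈ Ω, T.IsFull) {I : Inst S C}
    (hI : satAll I Ω) (h : C' → C) : satAll (Fact.map h ⁻¹' I) Ω :=
  fun T hT => tgdSat_preimage_map (hfull T hT) (hI T hT) h

end Pullback

section Answers

variable {S : Schema} {C : Type} {n : ℕ} {V : Type} {hV : Finite V}
  {E : Set (Fin n × Fin n)} {I : Inst S C}

theorem IsHom.mk_of_subset_preimage {A A' : Set (Fact S (Fin n ⊕ V))} {h : Fin n ⊕ V → C}
    (hh : IsHom ⟨V, hV, A, E⟩ I h) (hA' : A' ⊆ Fact.map h ⁻¹' I) :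
    IsHom ⟨V, hV, A', E⟩ I h :=
  ⟨hh.1, hA', hh.2.2⟩

theorem answers_mk_anti {A A' : Set (Fact S (Fin n ⊕ V))} (hA : A ⊆ A') :
    answers ⟨V, hV, A', E⟩ I ⊆ answers ⟨V, hV, A, E⟩ I := by
  rintro _ ⟨h, hh, rfl⟩
  exact ⟨h, hh.mk_of_subset_preimage (hA.trans hh.2.1), rfl⟩

end Answers

theorem statement5_general (S : Schema) (Ω : Set (TGD S))
    (hfull : ∀ T ∈ Ω, T.IsFull)
    (C : Type) (D : Inst S C)
    (chD : Inst S C) (hchD : IsChase Ω D chD)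
    (n : ℕ) (q : CQ S n)
    (chAtoms : Inst S (Fin n ⊕ q.V)) (hchq : IsChase Ω (canonDB q) chAtoms) :
    answers q chD = answers (CQ.mk q.V q.finV chAtoms q.eqs) chD := by
  refine subset_antisymm ?_ (answers_mk_anti hchq.1)
  rintro _ ⟨h, hh, rfl⟩
  have hpull : chAtoms ⊆ Fact.map h ⁻¹' chD :=
    hchq.2.2 _ hh.2.1 (satAll_preimage_map hfull hchD.2.1 h)
  exact ⟨h, IsHom.mk_of_subset_preimage hh hpull, rfl⟩

theorem statement5 (S : Schema) (Ω : Set (TGD S)) (hΩfin : Ω.Finite)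
    (hg : ∀ T ∈ Ω, T.IsGuarded) (hfull : ∀ T ∈ Ω, T.IsFull)
    (C : Type) (D : Inst S C) (hD : D.Finite)
    (chD : Inst S C) (hchD : IsChase Ω D chD)
    (n : ℕ) (q : CQ S n)
    (chAtoms : Inst S (Fin n ⊕ q.V)) (hchq : IsChase Ω (canonDB q) chAtoms) :
    answers q chD = answers (CQ.mk q.V q.finV chAtoms q.eqs) chD :=
  statement5_general S Ω hfull C D chD hchD n q chAtoms hchq

end DB
end

section
/- Let Σ be a schema, p(x̄) an equality-free conjunctive query over Σ, and D a finite Σ-instance. Let p⋆ be the marking of p, obtained by adding to p an atom R_x(x) for each variable x of p, where the R_x are fresh pairwise distinct unary relation symbols. Let P = D_p × D be the direct product of the canonical database of p with D, and let P⋆ = P ∪ { R_x((x,a)) : x a variable of p, a ∈ adom(D) }. Then the answer set of p⋆ on P⋆ is exactly { x̄ × ā : ā ∈ p(D) }, where x̄ × ā denotes the tuple ((x₁,a₁),…,(xₙ,aₙ)) for x̄ = x₁⋯xₙ and ā = a₁⋯aₙ. In particular, #p⋆(P⋆) = #p(D). -/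
/-!
The marker atoms `R_x(x)` force a homomorphism of `p⋆` into `P⋆` to send every variable `x` to
a pair `(x, a)`, i.e. to be the graph `x ↦ (x, g x)` of a map `g` into `adom D`; its atoms of `p`
then say precisely that `g` is a homomorphism of `p` into `D`. Conversely the graph of every
homomorphism `g` is one of `p⋆` into `P⋆`, which needs `p` equality-free since distinct variables
go to distinct pairs.
-/

namespace DB

/-- The schema extended with a fresh unary marking relation for every
variable of the CQ `p`. -/
def markSchema (S : Schema) (n : ℕ) (p : CQ S n) : Schema where
  Rel := S.Rel ⊕ (Fin n ⊕ p.V)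
  ar := Sum.elim S.ar fun _ => 1
  relFinite := by
    haveI := S.relFinite
    haveI := p.finV
    infer_instance

/-- The marking of a CQ: add the atom `R_x(x)` for every variable `x`. -/
def markCQ (S : Schema) (n : ℕ) (p : CQ S n) : CQ (markSchema S n p) n where
  V := p.V
  finV := p.finV
  atoms := {A : Fact (markSchema S n p) (Fin n ⊕ p.V) |
    (∃ B ∈ p.atoms, A = ⟨Sum.inl B.1, B.2⟩) ∨
    (∃ v : Fin n ⊕ p.V, A = ⟨Sum.inr v, fun _ => v⟩)}
  eqs := p.eqs

/-- An instance over `S`, viewed over the marking-extended schema. -/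
def liftInst {S : Schema} {n : ℕ} (p : CQ S n) {C : Type} (I : Inst S C) :
    Inst (markSchema S n p) C :=
  {f | ∃ g ∈ I, f = ⟨Sum.inl g.1, g.2⟩}

variable {S : Schema} {n : ℕ} {p : CQ S n} {C : Type} {D : Inst S C}

/-- The marked product `P⋆` of the canonical database of `p` with `D`. -/
def markedProd (p : CQ S n) (D : Inst S C) : Inst (markSchema S n p) ((Fin n ⊕ p.V) × C) :=
  liftInst p (prodInst (canonDB p) D) ∪
    {f | ∃ v : Fin n ⊕ p.V, ∃ a ∈ adom D, f = ⟨Sum.inr v, fun _ => (v, a)⟩}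

theorem inl_mem_markedProd {R : S.Rel} {t : Fin (S.ar R) → (Fin n ⊕ p.V) × C} :
    (⟨Sum.inl R, t⟩ : Fact (markSchema S n p) _) ∈ markedProd p D ↔
      ⟨R, t⟩ ∈ prodInst (canonDB p) D := by
  constructor
  · rintro (⟨⟨R', t'⟩, hg, hgeq⟩ | ⟨w, a, -, hw⟩)
    · cases hgeq
      exact hg
    · exact absurd (congrArg Sigma.fst hw) Sum.inl_ne_inr
  · exact fun hf => Or.inl ⟨_, hf, rfl⟩

theorem inr_mem_markedProd {v : Fin n ⊕ p.V} {t : Fin 1 → (Fin n ⊕ p.V) × C} :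
    (⟨Sum.inr v, t⟩ : Fact (markSchema S n p) _) ∈ markedProd p D ↔
      ∃ a ∈ adom D, t = fun _ => (v, a) := by
  constructor
  · rintro (⟨g, -, hg⟩ | ⟨w, a, ha, hw⟩)
    · exact absurd (congrArg Sigma.fst hg) Sum.inr_ne_inl
    · cases hw
      exact ⟨a, ha, rfl⟩
  · rintro ⟨a, ha, rfl⟩
    exact Or.inr ⟨v, a, ha, rfl⟩

theorem IsHom.eq_pair_of_markedProd {h : Fin n ⊕ p.V → (Fin n ⊕ p.V) × C}
    (hh : IsHom (markCQ S n p) (markedProd p D) h) (v : Fin n ⊕ p.V) :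
    ∃ a ∈ adom D, h v = (v, a) := by
  obtain ⟨a, ha, hv⟩ := inr_mem_markedProd.mp (hh.2.1 ⟨Sum.inr v, fun _ => v⟩ (Or.inr ⟨v, rfl⟩))
  exact ⟨a, ha, congrFun hv (0 : Fin 1)⟩

theorem IsHom.snd_of_markedProd {h : Fin n ⊕ p.V → (Fin n ⊕ p.V) × C}
    (hh : IsHom (markCQ S n p) (markedProd p D) h) : IsHom p D (Prod.snd ∘ h) := by
  refine ⟨fun v => ?_, fun B hB => ?_, fun e he => congrArg Prod.snd (hh.2.2 e he)⟩
  · obtain ⟨a, ha, hv⟩ := hh.eq_pair_of_markedProd v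
    simpa [hv] using ha
  · exact (inl_mem_markedProd.mp (hh.2.1 ⟨Sum.inl B.1, B.2⟩ (Or.inl ⟨B, hB, rfl⟩))).2

theorem IsHom.pair_markedProd (heq : p.eqs = ∅) {g : Fin n ⊕ p.V → C} (hg : IsHom p D g) :
    IsHom (markCQ S n p) (markedProd p D) (fun v => (v, g v)) := by
  refine ⟨fun v => ?_, ?_, fun e he => ?_⟩
  · exact ⟨⟨Sum.inr v, fun _ => (v, g v)⟩, Or.inr ⟨v, g v, hg.1 v, rfl⟩, (0 : Fin 1), rfl⟩
  · rintro A (⟨B, hB, rfl⟩ | ⟨v, rfl⟩)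
    · exact inl_mem_markedProd.mpr ⟨hB, hg.2.1 B hB⟩
    · exact inr_mem_markedProd.mpr ⟨g v, hg.1 v, rfl⟩
  · exact absurd (heq ▸ he : e ∈ (∅ : Set (Fin n × Fin n))) (Set.notMem_empty e)

theorem answers_markCQ_markedProd (heq : p.eqs = ∅) :
    answers (markCQ S n p) (markedProd p D) =
      (fun t : Fin n → C => fun i => ((Sum.inl i : Fin n ⊕ p.V), t i)) '' answers p D := by
  ext t
  constructor
  · rintro ⟨h, hh, rfl⟩
    refine ⟨_, ⟨_, hh.snd_of_markedProd, rfl⟩, funext fun i => ?_⟩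
    obtain ⟨a, -, hi⟩ := hh.eq_pair_of_markedProd (Sum.inl i)
    exact Prod.ext (congrArg Prod.fst hi).symm rfl
  · rintro ⟨_, ⟨g, hg, rfl⟩, rfl⟩
    exact ⟨_, hg.pair_markedProd heq, rfl⟩

theorem statement15_general (S : Schema) (n : ℕ) (p : CQ S n) (heq : p.eqs = ∅)
    (C : Type) (D : Inst S C) :
    answers (markCQ S n p)
        (liftInst p (prodInst (canonDB p) D) ∪
          {f | ∃ v : Fin n ⊕ p.V, ∃ a ∈ adom D, f = ⟨Sum.inr v, fun _ => (v, a)⟩})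
      = (fun t : Fin n → C =>
          fun i => ((Sum.inl i : Fin n ⊕ p.V), t i)) '' answers p D
    ∧ (answers (markCQ S n p)
        (liftInst p (prodInst (canonDB p) D) ∪
          {f | ∃ v : Fin n ⊕ p.V, ∃ a ∈ adom D, f = ⟨Sum.inr v, fun _ => (v, a)⟩})).ncard
      = (answers p D).ncard := by
  have hanswers := answers_markCQ_markedProd (D := D) heq
  have hinj : Function.Injective
      (fun t : Fin n → C => fun i => ((Sum.inl i : Fin n ⊕ p.V), t i)) :=
    fun _ _ h => funext fun i => congrArg Prod.snd (congrFun h i)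
  refine ⟨hanswers, ?_⟩
  change (answers (markCQ S n p) (markedProd p D)).ncard = _
  rw [hanswers, Set.ncard_image_of_injective _ hinj]

theorem statement15 (S : Schema) (n : ℕ) (p : CQ S n) (heq : p.eqs = ∅)
    (C : Type) (D : Inst S C) (hD : D.Finite) :
    answers (markCQ S n p)
        (liftInst p (prodInst (canonDB p) D) ∪
          {f | ∃ v : Fin n ⊕ p.V, ∃ a ∈ adom D, f = ⟨Sum.inr v, fun _ => (v, a)⟩})
      = (fun t : Fin n → C =>
          fun i => ((Sum.inl i : Fin n ⊕ p.V), t i)) '' answers p D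
    ∧ (answers (markCQ S n p)
        (liftInst p (prodInst (canonDB p) D) ∪
          {f | ∃ v : Fin n ⊕ p.V, ∃ a ∈ adom D, f = ⟨Sum.inr v, fun _ => (v, a)⟩})).ncard
      = (answers p D).ncard :=
  statement15_general S n p heq C D

end DB
end
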